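/- Let n ≥ 3. If the complete graph K_n admits a deque layout with k deques, then k ≥ (n² − 3n + 2)/(4n − 10). -/

import Mathlib

namespace DequePaper

/-- The four possible types of an edge in a deque: head-head, tail-tail,
head-tail and tail-head. -/
inductive EdgeType : Type
  | hh | tt | ht | th
  deriving DecidableEq

variable {V : Type} [LinearOrder V]

/-- Edges `(u,v)` and `(u',v')` (with `u ≺ v`, `u' ≺ v'`) cross:
`u ≺ u' ≺ v ≺ v'`. -/
def Cross (e e' : V × V) : Prop :=
  e.1 < e'.1 ∧ e'.1 < e.2 ∧ e.2 < e'.2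

/-- Edges `(u,v)` and `(u',v')` nest: `u ≺ u' ≺ v' ≺ v`. -/
def Nest (e e' : V × V) : Prop :=
  e.1 < e'.1 ∧ e'.1 < e'.2 ∧ e'.2 < e.2

/-- A set of edges is a stack iff no two of its edges cross. -/
def IsStack (E : Set (V × V)) : Prop :=
  ∀ e ∈ E, ∀ e' ∈ E, ¬ Cross e e'

/-- A set of edges is a queue iff no two of its edges nest. -/
def IsQueue (E : Set (V × V)) : Prop :=
  ∀ e ∈ E, ∀ e' ∈ E, ¬ Nest e e'

/-- A set of edges is a rique iff it contains no three edges
`(a,a')`, `(b,b')`, `(c,c')` with `a ≺ b ≺ c ≺ b'`, `b' ≺ a'` and `b' ≺ c'`. -/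
def IsRique (E : Set (V × V)) : Prop :=
  ¬ ∃ a a' b b' c c' : V, (a, a') ∈ E ∧ (b, b') ∈ E ∧ (c, c') ∈ E ∧
      a < b ∧ b < c ∧ c < b' ∧ b' < a' ∧ b' < c'

/-- The extension of the vertex order: all vertices, followed by the
wrap points (modelled by natural numbers), each wrap point lying strictly
after every vertex. -/
abbrev Ext (V : Type) := V ⊕ₗ ℕ

/-- A vertex, viewed in the extended order. -/
def vtx (v : V) : Ext V := toLex (Sum.inl v)

/-- A wrap point, viewed in the extended order. -/
def wpt (m : ℕ) : Ext V := toLex (Sum.inr m)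

/-- The interval of an edge in the upper family: `[u,v]` for an hh edge,
`[u,p(e)]` for an ht edge, `[v,p(e)]` for a th edge, nothing for a tt edge. -/
def upperIv (typ : V × V → EdgeType) (wrap : V × V → ℕ) (e : V × V) :
    Option (Ext V × Ext V) :=
  match typ e with
  | EdgeType.hh => some (vtx e.1, vtx e.2)
  | EdgeType.ht => some (vtx e.1, wpt (wrap e))
  | EdgeType.th => some (vtx e.2, wpt (wrap e))
  | EdgeType.tt => none

/-- The interval of an edge in the lower family: `[u,v]` for a tt edge,
`[v,p(e)]` for an ht edge, `[u,p(e)]` for a th edge, nothing for an hh edge. -/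
def lowerIv (typ : V × V → EdgeType) (wrap : V × V → ℕ) (e : V × V) :
    Option (Ext V × Ext V) :=
  match typ e with
  | EdgeType.tt => some (vtx e.1, vtx e.2)
  | EdgeType.ht => some (vtx e.2, wpt (wrap e))
  | EdgeType.th => some (vtx e.1, wpt (wrap e))
  | EdgeType.hh => none

/-- Two intervals `[x,y]` and `[x',y']` of the extended order cross:
`x ≺ x' ≺ y ≺ y'`. -/
def IvCross (i i' : Ext V × Ext V) : Prop :=
  i.1 < i'.1 ∧ i'.1 < i.2 ∧ i.2 < i'.2

/-- A family of intervals (one for each edge of `E` on which `iv` is defined)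
is pairwise non-crossing. -/
def FamilyNonCrossing (E : Set (V × V)) (iv : V × V → Option (Ext V × Ext V)) : Prop :=
  ∀ e ∈ E, ∀ e' ∈ E, ∀ i ∈ iv e, ∀ i' ∈ iv e', ¬ IvCross i i'

/-- `typ` and `wrap` form a witnessing type assignment for the edge set `E`
being a deque: wrap points are assigned injectively to the ht/th edges, and
both the upper and the lower families of intervals are pairwise non-crossing. -/
def IsDequeWitness (E : Set (V × V)) (typ : V × V → EdgeType) (wrap : V × V → ℕ) : Prop :=
  (∀ e ∈ E, ∀ e' ∈ E, (typ e = EdgeType.ht ∨ typ e = EdgeType.th) →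
      (typ e' = EdgeType.ht ∨ typ e' = EdgeType.th) → wrap e = wrap e' → e = e') ∧
  FamilyNonCrossing E (upperIv typ wrap) ∧
  FamilyNonCrossing E (lowerIv typ wrap)

/-- A set of edges is a deque iff it admits a witnessing type assignment. -/
def IsDeque (E : Set (V × V)) : Prop :=
  ∃ typ wrap, IsDequeWitness E typ wrap

/-- The edges of a graph `G`, written as ordered pairs with respect to the
vertex order given by the order embedding `f` into `ℕ`. -/
def orderedEdges {W : Type} (G : SimpleGraph W) (f : W ↪ ℕ) : Set (ℕ × ℕ) :=
  {p | ∃ u v, G.Adj u v ∧ f u = p.1 ∧ f v = p.2 ∧ p.1 < p.2}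

/-- `G` admits a layout with `k` pages, each page satisfying `P`:
a vertex order (injection into `ℕ`) together with a partition of the
edges into `k` parts (given by the colouring `c`), each part satisfying `P`. -/
def HasLayout {W : Type} (G : SimpleGraph W) (k : ℕ)
    (P : Set (ℕ × ℕ) → Prop) : Prop :=
  ∃ (f : W ↪ ℕ) (c : ℕ × ℕ → Fin k),
    ∀ i : Fin k, P {p | p ∈ orderedEdges G f ∧ c p = i}

/-- `G` admits a `k`-stack layout. -/
def HasStackLayout {W : Type} (G : SimpleGraph W) (k : ℕ) : Prop :=
  HasLayout G k IsStack

/-- `G` admits a `k`-queue layout. -/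
def HasQueueLayout {W : Type} (G : SimpleGraph W) (k : ℕ) : Prop :=
  HasLayout G k IsQueue

/-- `G` admits a `k`-rique layout. -/
def HasRiqueLayout {W : Type} (G : SimpleGraph W) (k : ℕ) : Prop :=
  HasLayout G k IsRique

/-- `G` admits a `k`-deque layout. -/
def HasDequeLayout {W : Type} (G : SimpleGraph W) (k : ℕ) : Prop :=
  HasLayout G k IsDeque

/-- The stack-number of `G`. -/
noncomputable def stackNumber {W : Type} (G : SimpleGraph W) : ℕ :=
  sInf {k | HasStackLayout G k}

/-- The queue-number of `G`. -/
noncomputable def queueNumber {W : Type} (G : SimpleGraph W) : ℕ :=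
  sInf {k | HasQueueLayout G k}

/-- The rique-number of `G`. -/
noncomputable def riqueNumber {W : Type} (G : SimpleGraph W) : ℕ :=
  sInf {k | HasRiqueLayout G k}

/-- The deque-number of `G`. -/
noncomputable def dequeNumber {W : Type} (G : SimpleGraph W) : ℕ :=
  sInf {k | HasDequeLayout G k}

end DequePaper

/-!
Number the vertices `0, …, n - 1` along the layout and call an edge long when its ends are not
consecutive. `K_n` has `(n - 1).choose 2` long edges, so it suffices that a deque holds at most
`2n - 5` of them.

The head–head edges `A` and the tail–tail edges `B` of a deque are stacks; call a position a cut
point of a stack if none of its edges passes strictly over it. For a stack `F` of long edges,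
`|F| + |cut F| ≤ n`, since sending an edge to the right end of its first child in the laminar
family `F ∪ {(x, x + 1)}` is an injection into the positions that are not cut points. A wrap edge
enters the upper family at a cut point of `A` and the lower family at a cut point of `B`, and as
the rays to the wrap points do not cross, these apex pairs form a chain in the product order. The
number of cut points of `A` and of `B` below an apex pair therefore increases strictly along the
chain, and it lies in `[4, |cut A| + |cut B| - 2]`: besides `0` and `n - 1`, two cut points at
distance at least 2 with no cut point between them are joined by an edge of the stack, which a
wrap edge is not. So there are at most `|cut A| + |cut B| - 5` wrap edges, and adding up, the deque
has at most `2n - 5` long edges.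
-/

namespace DequePaper

open Finset

section CutPoints

def longPairs (n : ℕ) : Finset (ℕ × ℕ) :=
  (range n ×ˢ range n).filter fun e => e.1 + 2 ≤ e.2

lemma mem_longPairs {n : ℕ} {e : ℕ × ℕ} : e ∈ longPairs n ↔ e.1 + 2 ≤ e.2 ∧ e.2 < n := by
  simp only [longPairs, mem_filter, mem_product, mem_range]
  omega

lemma card_longPairs (n : ℕ) : #(longPairs n) = (n - 1).choose 2 := by
  rw [← card_range (n - 1), ← card_product_filter_lt]
  refine card_nbij' (fun e => (e.1, e.2 - 1)) (fun e => (e.1, e.2 + 1)) ?_ ?_ ?_ ?_ <;>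
    intro e he <;> simp_all [mem_longPairs, Prod.ext_iff] <;> omega

def cutPoints (n : ℕ) (F : Finset (ℕ × ℕ)) : Finset ℕ :=
  (range n).filter fun x => ∀ e ∈ F, x ∉ Set.Ioo e.1 e.2

variable {n : ℕ} {F : Finset (ℕ × ℕ)}

lemma mem_cutPoints {x : ℕ} : x ∈ cutPoints n F ↔ x < n ∧ ∀ e ∈ F, x ∉ Set.Ioo e.1 e.2 := by
  simp only [cutPoints, mem_filter, mem_range]

lemma zero_mem_cutPoints (hn : 0 < n) : 0 ∈ cutPoints n F :=
  mem_cutPoints.2 ⟨hn, fun _ _ h => Nat.not_lt_zero _ h.1⟩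

lemma pred_mem_cutPoints (hn : 0 < n) (hF : F ⊆ longPairs n) : n - 1 ∈ cutPoints n F :=
  mem_cutPoints.2 ⟨by omega, fun e he h =>
    absurd h.2 (by have := (mem_longPairs.1 (hF he)).2; omega)⟩

/-- The right end of the first child of `e` in the laminar family `F ∪ {(x, x + 1)}`. -/
def firstChildEnd (F : Finset (ℕ × ℕ)) (e : ℕ × ℕ) : ℕ :=
  ((Ioo e.1 e.2).filter fun z => z = e.1 + 1 ∨ (e.1, z) ∈ F).sup id

lemma firstChildEnd_spec {e : ℕ × ℕ} (he : e.1 + 2 ≤ e.2) :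
    e.1 < firstChildEnd F e ∧ firstChildEnd F e < e.2 ∧
      (firstChildEnd F e = e.1 + 1 ∨ (e.1, firstChildEnd F e) ∈ F) := by
  have hmem : e.1 + 1 ∈ (Ioo e.1 e.2).filter fun z => z = e.1 + 1 ∨ (e.1, z) ∈ F := by
    simp only [mem_filter, mem_Ioo, true_or, and_true]
    omega
  obtain ⟨z, hz, hsup⟩ := exists_mem_eq_sup _ ⟨_, hmem⟩ id
  simp only [mem_filter, mem_Ioo] at hz
  rw [firstChildEnd, hsup]
  exact ⟨hz.1.1, hz.1.2, hz.2⟩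

lemma le_firstChildEnd {e : ℕ × ℕ} {z : ℕ} (h1 : e.1 < z) (h2 : z < e.2) (hz : (e.1, z) ∈ F) :
    z ≤ firstChildEnd F e :=
  le_sup (f := id) (mem_filter.2 ⟨mem_Ioo.2 ⟨h1, h2⟩, Or.inr hz⟩)

lemma firstChildEnd_injOn (hF : IsStack (F : Set (ℕ × ℕ))) (hl : ∀ e ∈ F, e.1 + 2 ≤ e.2) :
    Set.InjOn (firstChildEnd F) F := by
  have key : ∀ e ∈ F, ∀ e' ∈ F, firstChildEnd F e = firstChildEnd F e' →
      e'.1 ≤ e.1 ∧ (e.1 = e'.1 → e'.2 ≤ e.2) := by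
    intro e he e' he' hw
    obtain ⟨h1, h2, h3⟩ := firstChildEnd_spec (F := F) (hl e he)
    obtain ⟨h1', h2', -⟩ := firstChildEnd_spec (F := F) (hl e' he')
    refine ⟨not_lt.1 fun hlt => ?_, fun heq => not_lt.1 fun hlt => ?_⟩
    · rcases h3 with h3 | h3
      · omega
      · exact hF _ h3 _ he' ⟨hlt, by omega, by omega⟩
    · have := le_firstChildEnd (F := F) (e := e') (by omega) hlt (heq ▸ he)
      omega
  intro e he e' he' hw
  obtain ⟨h1, h2⟩ := key e he e' he' hw
  obtain ⟨h1', h2'⟩ := key e' he' e he hw.symm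
  exact Prod.ext (by omega) (by omega)

theorem card_add_card_cutPoints_le (hF : IsStack (F : Set (ℕ × ℕ))) (hl : F ⊆ longPairs n) :
    #F + #(cutPoints n F) ≤ n := by
  have hlong : ∀ e ∈ F, e.1 + 2 ≤ e.2 := fun e he => (mem_longPairs.1 (hl he)).1
  have hmaps : Set.MapsTo (firstChildEnd F) F ↑(range n \ cutPoints n F) := by
    intro e he
    obtain ⟨h1, h2, -⟩ := firstChildEnd_spec (F := F) (hlong e he)
    have := (mem_longPairs.1 (hl he)).2
    rw [mem_coe, mem_sdiff, mem_range, mem_cutPoints]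
    exact ⟨by omega, fun h => h.2 e he ⟨h1, h2⟩⟩
  have hsub : cutPoints n F ⊆ range n := filter_subset _ _
  have := card_le_card_of_injOn _ hmaps (firstChildEnd_injOn hF hlong)
  rw [card_sdiff_of_subset hsub, card_range] at this
  have := (card_le_card hsub).trans (card_range n).le
  omega

lemma firstChildEnd_mem_cutPoints (hF : IsStack (F : Set (ℕ × ℕ))) {u v : ℕ}
    (hu : u ∈ cutPoints n F) (hv : v ∈ cutPoints n F) (huv : u + 2 ≤ v) (hnot : (u, v) ∉ F) :
    firstChildEnd F (u, v) ∈ cutPoints n F := by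
  obtain ⟨h1, h2, h3⟩ := firstChildEnd_spec (F := F) (e := (u, v)) huv
  set w := firstChildEnd F (u, v)
  obtain ⟨hun, hu⟩ := mem_cutPoints.1 hu
  obtain ⟨hvn, hv⟩ := mem_cutPoints.1 hv
  refine mem_cutPoints.2 ⟨by omega, fun g hg ⟨hgw, hwg⟩ => ?_⟩
  rcases lt_trichotomy g.1 u with hgu | hgu | hgu
  · exact hu g hg ⟨hgu, by omega⟩
  · rcases lt_trichotomy g.2 v with hgv | hgv | hgv
    · have := le_firstChildEnd (F := F) (e := (u, v)) (by omega) hgv (hgu ▸ hg)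
      omega
    · exact hnot (by rwa [← hgu, ← hgv])
    · exact hv g hg ⟨by omega, hgv⟩
  · rcases h3 with h3 | h3
    · omega
    · exact hF _ h3 _ hg ⟨hgu, hgw, hwg⟩

def cutRank (n : ℕ) (F : Finset (ℕ × ℕ)) (u : ℕ) : ℕ :=
  #((cutPoints n F).filter (· ≤ u))

lemma cutRank_mono {u v : ℕ} (huv : u ≤ v) : cutRank n F u ≤ cutRank n F v :=
  card_le_card (monotone_filter_right _ fun _ _ h => h.trans huv)

lemma cutRank_lt_cutRank {u v : ℕ} (hv : v ∈ cutPoints n F) (huv : u < v) :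
    cutRank n F u < cutRank n F v :=
  card_lt_card ((ssubset_iff_of_subset (monotone_filter_right _ fun _ _ h => h.trans huv.le)).2
    ⟨v, mem_filter.2 ⟨hv, le_rfl⟩, fun h => by have := (mem_filter.1 h).2; omega⟩)

lemma cutRank_pos (hn : 0 < n) (u : ℕ) : 0 < cutRank n F u :=
  card_pos.2 ⟨0, mem_filter.2 ⟨zero_mem_cutPoints hn, Nat.zero_le u⟩⟩

lemma cutRank_pred (n : ℕ) (F : Finset (ℕ × ℕ)) : cutRank n F (n - 1) = #(cutPoints n F) :=
  congrArg card (filter_true_of_mem fun x hx => by have := (mem_cutPoints.1 hx).1; omega)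

lemma cutRank_add_two_le (hF : IsStack (F : Set (ℕ × ℕ))) {u v : ℕ} (hu : u ∈ cutPoints n F)
    (hv : v ∈ cutPoints n F) (huv : u + 2 ≤ v) (hnot : (u, v) ∉ F) :
    cutRank n F u + 2 ≤ cutRank n F v := by
  obtain ⟨h1, h2, -⟩ : u < _ ∧ _ < v ∧ _ := firstChildEnd_spec (F := F) (e := (u, v)) huv
  have := cutRank_lt_cutRank (firstChildEnd_mem_cutPoints hF hu hv huv hnot) h1
  have := cutRank_lt_cutRank hv h2
  omega

lemma two_le_card_cutPoints (hn : 2 ≤ n) (hl : F ⊆ longPairs n) : 2 ≤ #(cutPoints n F) := by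
  rw [← cutRank_pred]
  have := cutRank_lt_cutRank (pred_mem_cutPoints (by omega) hl) (show 0 < n - 1 by omega)
  have := cutRank_pos (n := n) (F := F) (by omega) 0
  omega

lemma three_le_card_cutPoints (hn : 3 ≤ n) (hF : IsStack (F : Set (ℕ × ℕ)))
    (hl : F ⊆ longPairs n) (hnot : (0, n - 1) ∉ F) : 3 ≤ #(cutPoints n F) := by
  rw [← cutRank_pred]
  have := cutRank_add_two_le hF (zero_mem_cutPoints (by omega)) (pred_mem_cutPoints (by omega) hl)
    (by omega) hnot
  have := cutRank_pos (n := n) (F := F) (by omega) 0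
  omega

end CutPoints

section ApexChain

/-- `A`, `B` and `C` stand for the head–head, tail–tail and wrap edges of a deque, and `o e` for
the apex pair of the wrap edge `e`: its endpoint in the upper family, then in the lower one. -/
structure IsApexChain (n : ℕ) (A B C : Finset (ℕ × ℕ)) (o : ℕ × ℕ → ℕ × ℕ) : Prop where
  subset_longPairs : C ⊆ longPairs n
  disjoint_fst : Disjoint A C
  disjoint_snd : Disjoint B C
  orient : ∀ e ∈ C, o e = e ∨ o e = e.swap
  fst_mem_cutPoints : ∀ e ∈ C, (o e).1 ∈ cutPoints n A
  snd_mem_cutPoints : ∀ e ∈ C, (o e).2 ∈ cutPoints n B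
  total : ∀ e ∈ C, ∀ f ∈ C, o e ≤ o f ∨ o f ≤ o e

namespace IsApexChain

variable {n : ℕ} {A B C : Finset (ℕ × ℕ)} {o : ℕ × ℕ → ℕ × ℕ}

lemma four_le_cutRank_add (hW : IsApexChain n A B C o) (hA : IsStack (A : Set (ℕ × ℕ)))
    (hB : IsStack (B : Set (ℕ × ℕ))) {e : ℕ × ℕ} (he : e ∈ C) :
    4 ≤ cutRank n A (o e).1 + cutRank n B (o e).2 := by
  obtain ⟨h12, h2n⟩ := mem_longPairs.1 (hW.subset_longPairs he)
  have ha := hW.fst_mem_cutPoints e he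
  have hb := hW.snd_mem_cutPoints e he
  have heA : e ∉ A := Finset.disjoint_right.1 hW.disjoint_fst he
  have heB : e ∉ B := Finset.disjoint_right.1 hW.disjoint_snd he
  have hA0 := cutRank_pos (n := n) (F := A) (by omega) 0
  have hB0 := cutRank_pos (n := n) (F := B) (by omega) 0
  have hA1 := cutRank_pos (n := n) (F := A) (by omega) (o e).1
  have hB1 := cutRank_pos (n := n) (F := B) (by omega) (o e).2
  rcases hW.orient e he with ho | ho <;>
    simp only [ho, Prod.fst_swap, Prod.snd_swap] at ha hb hA1 hB1 ⊢
  · by_cases h0 : e.1 = 0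
    · have := cutRank_add_two_le hB (zero_mem_cutPoints (by omega)) hb (by omega) (by rwa [← h0])
      omega
    · have := cutRank_lt_cutRank ha (Nat.pos_of_ne_zero h0)
      have := cutRank_lt_cutRank hb (show 0 < e.2 by omega)
      omega
  · by_cases h0 : e.1 = 0
    · have := cutRank_add_two_le hA (zero_mem_cutPoints (by omega)) ha (by omega) (by rwa [← h0])
      omega
    · have := cutRank_lt_cutRank ha (show 0 < e.2 by omega)
      have := cutRank_lt_cutRank hb (Nat.pos_of_ne_zero h0)
      omega

lemma cutRank_add_two_le_card (hW : IsApexChain n A B C o) (hA : IsStack (A : Set (ℕ × ℕ)))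
    (hB : IsStack (B : Set (ℕ × ℕ))) (hAl : A ⊆ longPairs n) (hBl : B ⊆ longPairs n)
    {e : ℕ × ℕ} (he : e ∈ C) :
    cutRank n A (o e).1 + cutRank n B (o e).2 + 2 ≤ #(cutPoints n A) + #(cutPoints n B) := by
  obtain ⟨h12, h2n⟩ := mem_longPairs.1 (hW.subset_longPairs he)
  have ha := hW.fst_mem_cutPoints e he
  have hb := hW.snd_mem_cutPoints e he
  have heA : e ∉ A := Finset.disjoint_right.1 hW.disjoint_fst he
  have heB : e ∉ B := Finset.disjoint_right.1 hW.disjoint_snd he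
  have hAn := pred_mem_cutPoints (by omega) hAl
  have hBn := pred_mem_cutPoints (by omega) hBl
  rw [← cutRank_pred n A, ← cutRank_pred n B]
  rcases hW.orient e he with ho | ho <;>
    simp only [ho, Prod.fst_swap, Prod.snd_swap] at ha hb ⊢
  · have := cutRank_lt_cutRank hAn (show e.1 < n - 1 by omega)
    by_cases hn : e.2 = n - 1
    · have := cutRank_add_two_le hA ha hAn (by omega) (by rwa [← hn])
      rw [hn]
      omega
    · have := cutRank_lt_cutRank hBn (show e.2 < n - 1 by omega)
      omega
  · have := cutRank_lt_cutRank hBn (show e.1 < n - 1 by omega)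
    by_cases hn : e.2 = n - 1
    · have := cutRank_add_two_le hB hb hBn (by omega) (by rwa [← hn])
      rw [hn]
      omega
    · have := cutRank_lt_cutRank hAn (show e.2 < n - 1 by omega)
      omega

lemma injOn_cutRank_add (hW : IsApexChain n A B C o) :
    Set.InjOn (fun e => cutRank n A (o e).1 + cutRank n B (o e).2) C := by
  have hlt : ∀ e ∈ C, ∀ f ∈ C, o e < o f →
      cutRank n A (o e).1 + cutRank n B (o e).2 < cutRank n A (o f).1 + cutRank n B (o f).2 := by
    intro e _ f hf h
    rcases Prod.lt_iff.1 h with ⟨h1, h2⟩ | ⟨h1, h2⟩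
    · have := cutRank_lt_cutRank (hW.fst_mem_cutPoints f hf) h1
      have := cutRank_mono (n := n) (F := B) h2
      omega
    · have := cutRank_mono (n := n) (F := A) h1
      have := cutRank_lt_cutRank (hW.snd_mem_cutPoints f hf) h2
      omega
  have ho : Set.InjOn o C := by
    intro e he f hf h
    have := (mem_longPairs.1 (hW.subset_longPairs he)).1
    have := (mem_longPairs.1 (hW.subset_longPairs hf)).1
    rcases hW.orient e he with h1 | h1 <;> rcases hW.orient f hf with h2 | h2 <;>
      simp only [h1, h2, Prod.ext_iff, Prod.fst_swap, Prod.snd_swap] at h <;>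
      exact Prod.ext (by omega) (by omega)
  intro e he f hf h
  by_contra hne
  have hne' : o e ≠ o f := fun h' => hne (ho he hf h')
  rcases hW.total e he f hf with h' | h'
  · exact (hlt e he f hf (lt_of_le_of_ne h' hne')).ne h
  · exact (hlt f hf e he (lt_of_le_of_ne h' hne'.symm)).ne' h

theorem card_add_five_le (hn : 3 ≤ n) (hW : IsApexChain n A B C o)
    (hA : IsStack (A : Set (ℕ × ℕ))) (hB : IsStack (B : Set (ℕ × ℕ))) (hAl : A ⊆ longPairs n)
    (hBl : B ⊆ longPairs n) (hAB : Disjoint A B) :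
    #C + 5 ≤ #(cutPoints n A) + #(cutPoints n B) := by
  have h5 : 5 ≤ #(cutPoints n A) + #(cutPoints n B) := by
    by_cases h : (0, n - 1) ∈ A
    · have := three_le_card_cutPoints hn hB hBl (Finset.disjoint_left.1 hAB h)
      have := two_le_card_cutPoints (by omega) hAl
      omega
    · have := three_le_card_cutPoints hn hA hAl h
      have := two_le_card_cutPoints (by omega) hBl
      omega
  have hmaps : Set.MapsTo (fun e => cutRank n A (o e).1 + cutRank n B (o e).2) C
      ↑(Icc 4 (#(cutPoints n A) + #(cutPoints n B) - 2)) := by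
    intro e he
    have := hW.four_le_cutRank_add hA hB he
    have := hW.cutRank_add_two_le_card hA hB hAl hBl he
    rw [mem_coe, mem_Icc]
    dsimp only
    omega
  have := card_le_card_of_injOn _ hmaps hW.injOn_cutRank_add
  rw [Nat.card_Icc] at this
  omega

end IsApexChain

end ApexChain

section Deque

variable {V : Type}

lemma vtx_lt_vtx [LinearOrder V] {x y : V} : (vtx x : Ext V) < vtx y ↔ x < y :=
  Sum.Lex.inl_lt_inl_iff

lemma vtx_lt_wpt [LinearOrder V] (x : V) (m : ℕ) : (vtx x : Ext V) < wpt m :=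
  Sum.Lex.inl_lt_inr x m

namespace FamilyNonCrossing

variable [LinearOrder V] {E : Set (V × V)} {iv : V × V → Option (Ext V × Ext V)}

lemma isStack (h : FamilyNonCrossing E iv) {S : Set (V × V)} (hS : S ⊆ E)
    (hiv : ∀ e ∈ S, iv e = some (vtx e.1, vtx e.2)) : IsStack S :=
  fun e he e' he' ⟨h1, h2, h3⟩ => h e (hS he) e' (hS he') _ (hiv e he) _ (hiv e' he')
    ⟨vtx_lt_vtx.2 h1, vtx_lt_vtx.2 h2, vtx_lt_vtx.2 h3⟩

lemma notMem_Ioo (h : FamilyNonCrossing E iv) {e f : V × V} (he : e ∈ E) (hf : f ∈ E)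
    (hive : iv e = some (vtx e.1, vtx e.2)) {x : V} {m : ℕ} (hivf : iv f = some (vtx x, wpt m)) :
    x ∉ Set.Ioo e.1 e.2 :=
  fun ⟨h1, h2⟩ => h e he f hf _ hive _ hivf ⟨vtx_lt_vtx.2 h1, vtx_lt_vtx.2 h2, vtx_lt_wpt _ _⟩

lemma le_of_wpt_lt (h : FamilyNonCrossing E iv) {e f : V × V} (he : e ∈ E) (hf : f ∈ E)
    {x x' : V} {m m' : ℕ} (hive : iv e = some (vtx x, wpt m))
    (hivf : iv f = some (vtx x', wpt m')) (hm : m < m') : x' ≤ x :=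
  not_lt.1 fun hx => h e he f hf _ hive _ hivf
    ⟨vtx_lt_vtx.2 hx, vtx_lt_wpt _ _, Sum.Lex.inr_lt_inr_iff.2 hm⟩

lemma preimage {W : Type} [LinearOrder W] (h : FamilyNonCrossing E iv) {G : W × W → V × V}
    {φ : Ext W → Ext V} (hφ : StrictMono φ) {iv' : W × W → Option (Ext W × Ext W)}
    (hiv : ∀ e, (iv' e).map (Prod.map φ φ) = iv (G e)) : FamilyNonCrossing (G ⁻¹' E) iv' := by
  intro e he e' he' i hi i' hi' ⟨h1, h2, h3⟩
  refine h _ he _ he' (Prod.map φ φ i) ?_ (Prod.map φ φ i') ?_ ⟨hφ h1, hφ h2, hφ h3⟩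
  · rw [Option.mem_def, ← hiv, Option.mem_def.1 hi]
    rfl
  · rw [Option.mem_def, ← hiv, Option.mem_def.1 hi']
    rfl

end FamilyNonCrossing

def extMap {W : Type} (g : W → V) (x : Ext W) : Ext V :=
  Sum.elim (fun w => vtx (g w)) wpt (ofLex x)

lemma extMap_strictMono [LinearOrder V] {W : Type} [LinearOrder W] {g : W → V}
    (hg : StrictMono g) : StrictMono (extMap g) := by
  rintro (a | m) (b | m') h
  · exact vtx_lt_vtx.2 (hg (Sum.Lex.inl_lt_inl_iff.1 h))
  · exact vtx_lt_wpt _ _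
  · exact absurd h Sum.Lex.not_inr_lt_inl
  · exact Sum.Lex.inr_lt_inr_iff.2 (Sum.Lex.inr_lt_inr_iff.1 h)

theorem IsDeque.preimage [LinearOrder V] {W : Type} [LinearOrder W] {E : Set (V × V)}
    (hE : IsDeque E) {g : W → V} (hg : StrictMono g) : IsDeque (Prod.map g g ⁻¹' E) := by
  obtain ⟨typ, wrap, hinj, hup, hlow⟩ := hE
  refine ⟨typ ∘ Prod.map g g, wrap ∘ Prod.map g g, ?_, ?_, ?_⟩
  · exact fun e he e' he' ht ht' hw =>
      (hg.injective.prodMap hg.injective) (hinj _ he _ he' ht ht' hw)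
  · refine hup.preimage (extMap_strictMono hg) fun e => ?_
    simp only [upperIv, Function.comp]
    cases typ (Prod.map g g e) <;> rfl
  · refine hlow.preimage (extMap_strictMono hg) fun e => ?_
    simp only [lowerIv, Function.comp]
    cases typ (Prod.map g g e) <;> rfl

def apex (typ : V × V → EdgeType) (e : V × V) : V × V :=
  if typ e = .ht then e else e.swap

lemma apex_eq_or (typ : V × V → EdgeType) (e : V × V) :
    apex typ e = e ∨ apex typ e = e.swap := by
  unfold apex
  split_ifs <;> simp

section Intervals

variable {typ : V × V → EdgeType} {wrap : V × V → ℕ} {e : V × V}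

lemma upperIv_of_hh (h : typ e = .hh) : upperIv typ wrap e = some (vtx e.1, vtx e.2) := by
  simp [upperIv, h]

lemma lowerIv_of_tt (h : typ e = .tt) : lowerIv typ wrap e = some (vtx e.1, vtx e.2) := by
  simp [lowerIv, h]

lemma upperIv_of_wrap (h : typ e = .ht ∨ typ e = .th) :
    upperIv typ wrap e = some (vtx (apex typ e).1, wpt (wrap e)) := by
  rcases h with h | h <;> simp [upperIv, apex, h]

lemma lowerIv_of_wrap (h : typ e = .ht ∨ typ e = .th) :
    lowerIv typ wrap e = some (vtx (apex typ e).2, wpt (wrap e)) := by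
  rcases h with h | h <;> simp [lowerIv, apex, h]

end Intervals

namespace IsDequeWitness

variable [LinearOrder V] {E : Set (V × V)} {typ : V × V → EdgeType} {wrap : V × V → ℕ}

lemma isStack_hh (hw : IsDequeWitness E typ wrap) {S : Set (V × V)} (hS : S ⊆ E)
    (h : ∀ e ∈ S, typ e = .hh) : IsStack S :=
  hw.2.1.isStack hS fun e he => upperIv_of_hh (h e he)

lemma isStack_tt (hw : IsDequeWitness E typ wrap) {S : Set (V × V)} (hS : S ⊆ E)
    (h : ∀ e ∈ S, typ e = .tt) : IsStack S :=
  hw.2.2.isStack hS fun e he => lowerIv_of_tt (h e he)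

lemma apex_le_of_wrap_lt (hw : IsDequeWitness E typ wrap) {e f : V × V} (he : e ∈ E)
    (hf : f ∈ E) (hte : typ e = .ht ∨ typ e = .th) (htf : typ f = .ht ∨ typ f = .th)
    (h : wrap e < wrap f) : apex typ f ≤ apex typ e :=
  Prod.le_def.2 ⟨hw.2.1.le_of_wpt_lt he hf (upperIv_of_wrap hte) (upperIv_of_wrap htf) h,
    hw.2.2.le_of_wpt_lt he hf (lowerIv_of_wrap hte) (lowerIv_of_wrap htf) h⟩

lemma isApexChain {n : ℕ} {E : Set (ℕ × ℕ)} {typ : ℕ × ℕ → EdgeType} {wrap : ℕ × ℕ → ℕ}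
    (hw : IsDequeWitness E typ wrap) {P : Finset (ℕ × ℕ)} (hPl : P ⊆ longPairs n)
    (hPE : ∀ e ∈ P, e ∈ E) :
    IsApexChain n (P.filter (typ · = .hh)) (P.filter (typ · = .tt))
      (P.filter fun e => typ e = .ht ∨ typ e = .th) (apex typ) := by
  have hE : ∀ {t : ℕ × ℕ → Prop} [DecidablePred t] {e}, e ∈ P.filter t → e ∈ E :=
    fun he => hPE _ (mem_filter.1 he).1
  have hwrap : ∀ {e}, e ∈ P.filter (fun e => typ e = .ht ∨ typ e = .th) →
      typ e = .ht ∨ typ e = .th := fun he => (mem_filter.1 he).2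
  refine ⟨(filter_subset _ _).trans hPl, ?_, ?_, fun e _ => apex_eq_or typ e, fun e he => ?_,
    fun e he => ?_, fun e he f hf => ?_⟩
  · exact disjoint_filter.2 fun e _ h h' => by rcases h' with h' | h' <;> simp [h] at h'
  · exact disjoint_filter.2 fun e _ h h' => by rcases h' with h' | h' <;> simp [h] at h'
  · have := mem_longPairs.1 (hPl (mem_filter.1 he).1)
    refine mem_cutPoints.2 ⟨?_, fun g hg => hw.2.1.notMem_Ioo (hE hg) (hE he)
      (upperIv_of_hh (mem_filter.1 hg).2) (upperIv_of_wrap (hwrap he))⟩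
    rcases apex_eq_or typ e with h | h <;> simp only [h, Prod.fst_swap] <;> omega
  · have := mem_longPairs.1 (hPl (mem_filter.1 he).1)
    refine mem_cutPoints.2 ⟨?_, fun g hg => hw.2.2.notMem_Ioo (hE hg) (hE he)
      (lowerIv_of_tt (mem_filter.1 hg).2) (lowerIv_of_wrap (hwrap he))⟩
    rcases apex_eq_or typ e with h | h <;> simp only [h, Prod.snd_swap] <;> omega
  · rcases lt_trichotomy (wrap e) (wrap f) with h | h | h
    · exact Or.inr (hw.apex_le_of_wrap_lt (hE he) (hE hf) (hwrap he) (hwrap hf) h)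
    · rw [hw.1 e (hE he) f (hE hf) (hwrap he) (hwrap hf) h]
      exact Or.inl le_rfl
    · exact Or.inl (hw.apex_le_of_wrap_lt (hE hf) (hE he) (hwrap hf) (hwrap he) h)

end IsDequeWitness

theorem IsDeque.card_filter_longPairs_le {n : ℕ} (hn : 3 ≤ n) {E : Set (ℕ × ℕ)}
    [DecidablePred (· ∈ E)] (hE : IsDeque E) : #((longPairs n).filter (· ∈ E)) ≤ 2 * n - 5 := by
  obtain ⟨typ, wrap, hw⟩ := hE
  set P := (longPairs n).filter (· ∈ E)
  have hPl : P ⊆ longPairs n := filter_subset _ _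
  have hPE : ∀ e ∈ P, e ∈ E := fun e he => (mem_filter.1 he).2
  set A := P.filter (typ · = .hh)
  set B := P.filter (typ · = .tt)
  set C := P.filter fun e => typ e = .ht ∨ typ e = .th
  have hAl : A ⊆ longPairs n := (filter_subset _ _).trans hPl
  have hBl : B ⊆ longPairs n := (filter_subset _ _).trans hPl
  have hA : IsStack (A : Set (ℕ × ℕ)) :=
    hw.isStack_hh (fun e he => hPE e (mem_filter.1 he).1) fun e he => (mem_filter.1 he).2
  have hB : IsStack (B : Set (ℕ × ℕ)) :=
    hw.isStack_tt (fun e he => hPE e (mem_filter.1 he).1) fun e he => (mem_filter.1 he).2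
  have hAB : Disjoint A B := disjoint_filter.2 fun e _ h h' => by simp [h] at h'
  have hcover : P ⊆ A ∪ B ∪ C := fun e he => by
    cases h : typ e <;> simp [A, B, C, he, h]
  have := card_le_card hcover
  have := card_union_le (A ∪ B) C
  have := card_union_le A B
  have := card_add_card_cutPoints_le hA hAl
  have := card_add_card_cutPoints_le hB hBl
  have : #C + 5 ≤ #(cutPoints n A) + #(cutPoints n B) :=
    (hw.isApexChain hPl hPE).card_add_five_le hn hA hB hAl hBl hAB
  omega

end Deque

lemma exists_strictMono_mem_range {n : ℕ} (f : Fin n ↪ ℕ) :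
    ∃ g : ℕ → ℕ, StrictMono g ∧ ∀ i < n, g i ∈ Set.range f := by
  classical
  set s := univ.image f
  have hs : #s = n := by simp [s, card_image_of_injective _ f.injective]
  set φ := s.orderEmbOfFin hs
  have hφ : ∀ j, φ j ≤ s.sup id := fun j => le_sup (f := id) (s.orderEmbOfFin_mem hs j)
  refine ⟨fun i => if h : i < n then φ ⟨i, h⟩ else s.sup id + 1 + i, ?_, fun i hi => ?_⟩
  · refine strictMono_nat_of_lt_succ fun i => ?_
    by_cases h1 : i + 1 < n
    · simp only [h1, show i < n by omega, dite_true]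
      exact φ.strictMono (Fin.mk_lt_mk.2 (Nat.lt_succ_self i))
    · by_cases h0 : i < n
      · simp only [h0, h1, dite_true, dite_false]
        have := hφ ⟨i, h0⟩
        omega
      · simp only [h0, h1, dite_false]
        omega
  · obtain ⟨y, -, hy⟩ := mem_image.1 (s.orderEmbOfFin_mem hs ⟨i, hi⟩)
    simpa [hi] using ⟨y, hy⟩

theorem HasDequeLayout.card_longPairs_le {n k : ℕ} (hn : 3 ≤ n)
    (h : HasDequeLayout (⊤ : SimpleGraph (Fin n)) k) : #(longPairs n) ≤ k * (2 * n - 5) := by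
  classical
  obtain ⟨f, c, hc⟩ := h
  obtain ⟨g, hg, hgf⟩ := exists_strictMono_mem_range f
  set E : Fin k → Set (ℕ × ℕ) :=
    fun j => Prod.map g g ⁻¹' {p | p ∈ orderedEdges ⊤ f ∧ c p = j}
  have hcover : longPairs n ⊆ univ.biUnion fun j => (longPairs n).filter (· ∈ E j) := by
    intro q hq
    obtain ⟨h12, h2n⟩ := mem_longPairs.1 hq
    obtain ⟨v, hv⟩ := hgf q.1 (by omega)
    obtain ⟨w, hw⟩ := hgf q.2 h2n
    have hlt : g q.1 < g q.2 := hg (by omega)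
    simp only [mem_biUnion, mem_univ, true_and, mem_filter]
    refine ⟨c (g q.1, g q.2), hq, ⟨v, w, ?_, hv, hw, hlt⟩, rfl⟩
    rw [SimpleGraph.top_adj]
    rintro rfl
    omega
  calc #(longPairs n) ≤ ∑ j, #((longPairs n).filter (· ∈ E j)) :=
        (card_le_card hcover).trans card_biUnion_le
    _ ≤ ∑ _j : Fin k, (2 * n - 5) :=
        sum_le_sum fun j _ => ((hc j).preimage hg).card_filter_longPairs_le hn
    _ = k * (2 * n - 5) := by simp

/-- Let `n ≥ 3`. If the complete graph `K_n` admits a deque layout with `k`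
deques, then `k ≥ (n² - 3n + 2)/(4n - 10)` over the rationals. -/
theorem complete_deque_lower_bound (n k : ℕ) (hn : 3 ≤ n)
    (h : HasDequeLayout (⊤ : SimpleGraph (Fin n)) k) :
    ((n : ℚ) ^ 2 - 3 * n + 2) / (4 * n - 10) ≤ (k : ℚ) := by
  have hk := h.card_longPairs_le hn
  rw [card_longPairs] at hk
  obtain ⟨m, rfl⟩ : ∃ m, n = m + 3 := ⟨n - 3, by omega⟩
  have hk' : (m + 2).choose 2 ≤ k * (2 * m + 1) := by
    simpa [show 2 * (m + 3) - 5 = 2 * m + 1 by omega] using hk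
  have hq : (((m + 2).choose 2 : ℕ) : ℚ) ≤ k * (2 * m + 1) := by exact_mod_cast hk'
  have hm : (0 : ℚ) ≤ m := m.cast_nonneg
  rw [Nat.cast_choose_two] at hq
  push_cast at hq ⊢
  rw [div_le_iff₀ (by linarith)]
  nlinarith

end DequePaper
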